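/- For the cycle C_n on n ≥ 3 vertices, L□_V(C_n)=2n−1. -/

import Mathlib

open SimpleGraph

/-- An `l`-track on `G`: a surjective function whose consecutive values are adjacent. -/
def IsTrack {V : Type*} (G : SimpleGraph V) {l : ℕ} (f : Fin l → V) : Prop :=
  Function.Surjective f ∧
    ∀ i : ℕ, ∀ hi : i + 1 < l, G.Adj (f ⟨i, Nat.lt_of_succ_lt hi⟩) (f ⟨i + 1, hi⟩)

/-- A lazy `l`-track on `G`: consecutive values are adjacent or equal. -/
def IsLazyTrack {V : Type*} (G : SimpleGraph V) {l : ℕ} (f : Fin l → V) : Prop :=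
  Function.Surjective f ∧
    ∀ i : ℕ, ∀ hi : i + 1 < l,
      G.Adj (f ⟨i, Nat.lt_of_succ_lt hi⟩) (f ⟨i + 1, hi⟩) ∨
        f ⟨i, Nat.lt_of_succ_lt hi⟩ = f ⟨i + 1, hi⟩

/-- The condition that every edge of `G` is traversed by `f`. -/
def SweepCond {V : Type*} (G : SimpleGraph V) {l : ℕ} (f : Fin l → V) : Prop :=
  ∀ e ∈ G.edgeSet, ∃ i : ℕ, ∃ hi : i + 1 < l,
    e = s(f ⟨i, Nat.lt_of_succ_lt hi⟩, f ⟨i + 1, hi⟩)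

/-- An `l`-sweep on `G`: an `l`-track traversing every edge. -/
def IsSweep {V : Type*} (G : SimpleGraph V) {l : ℕ} (f : Fin l → V) : Prop :=
  IsTrack G f ∧ SweepCond G f

/-- A lazy `l`-sweep on `G`: a lazy `l`-track traversing every edge. -/
def IsLazySweep {V : Type*} (G : SimpleGraph V) {l : ℕ} (f : Fin l → V) : Prop :=
  IsLazyTrack G f ∧ SweepCond G f

/-- `f` and `g` are opposite: at each step exactly `f` moves iff `g` stays. -/
def IsOpposite {V : Type*} (G : SimpleGraph V) {l : ℕ} (f g : Fin l → V) : Prop :=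
  ∀ i : ℕ, ∀ hi : i + 1 < l,
    (G.Adj (f ⟨i, Nat.lt_of_succ_lt hi⟩) (f ⟨i + 1, hi⟩) ↔
      g ⟨i, Nat.lt_of_succ_lt hi⟩ = g ⟨i + 1, hi⟩)

/-- The distance `m_G(f,g)`: minimal distance between simultaneous positions. -/
noncomputable def mDist {V : Type*} (G : SimpleGraph V) {l : ℕ} (f g : Fin l → V) : ℕ :=
  sInf {d | ∃ i : Fin l, G.dist (f i) (g i) = d}

/-- Strong vertex span `σ⊠_V(G)`. -/
noncomputable def strongVertexSpan {V : Type*} (G : SimpleGraph V) : ℕ :=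
  sSup {d | ∃ (l : ℕ) (f g : Fin l → V), IsLazyTrack G f ∧ IsLazyTrack G g ∧ mDist G f g = d}

/-- Direct vertex span `σ×_V(G)`. -/
noncomputable def directVertexSpan {V : Type*} (G : SimpleGraph V) : ℕ :=
  sSup {d | ∃ (l : ℕ) (f g : Fin l → V), IsTrack G f ∧ IsTrack G g ∧ mDist G f g = d}

/-- Cartesian vertex span `σ□_V(G)`. -/
noncomputable def cartesianVertexSpan {V : Type*} (G : SimpleGraph V) : ℕ :=
  sSup {d | ∃ (l : ℕ) (f g : Fin l → V),
    IsLazyTrack G f ∧ IsLazyTrack G g ∧ IsOpposite G f g ∧ mDist G f g = d}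

/-- Strong edge span `σ⊠_E(G)`. -/
noncomputable def strongEdgeSpan {V : Type*} (G : SimpleGraph V) : ℕ :=
  sSup {d | ∃ (l : ℕ) (f g : Fin l → V), IsLazySweep G f ∧ IsLazySweep G g ∧ mDist G f g = d}

/-- Direct edge span `σ×_E(G)`. -/
noncomputable def directEdgeSpan {V : Type*} (G : SimpleGraph V) : ℕ :=
  sSup {d | ∃ (l : ℕ) (f g : Fin l → V), IsSweep G f ∧ IsSweep G g ∧ mDist G f g = d}

/-- Cartesian edge span `σ□_E(G)`. -/
noncomputable def cartesianEdgeSpan {V : Type*} (G : SimpleGraph V) : ℕ :=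
  sSup {d | ∃ (l : ℕ) (f g : Fin l → V),
    IsLazySweep G f ∧ IsLazySweep G g ∧ IsOpposite G f g ∧ mDist G f g = d}

/-- `L⊠_V(G)`: minimal length of lazy tracks realizing the strong vertex span. -/
noncomputable def strongVertexL {V : Type*} (G : SimpleGraph V) : ℕ :=
  sInf {l | ∃ f g : Fin l → V,
    IsLazyTrack G f ∧ IsLazyTrack G g ∧ mDist G f g = strongVertexSpan G}

/-- `L×_V(G)`. -/
noncomputable def directVertexL {V : Type*} (G : SimpleGraph V) : ℕ :=
  sInf {l | ∃ f g : Fin l → V,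
    IsTrack G f ∧ IsTrack G g ∧ mDist G f g = directVertexSpan G}

/-- `L□_V(G)`. -/
noncomputable def cartesianVertexL {V : Type*} (G : SimpleGraph V) : ℕ :=
  sInf {l | ∃ f g : Fin l → V,
    IsLazyTrack G f ∧ IsLazyTrack G g ∧ IsOpposite G f g ∧ mDist G f g = cartesianVertexSpan G}

/-- `L⊠_E(G)`. -/
noncomputable def strongEdgeL {V : Type*} (G : SimpleGraph V) : ℕ :=
  sInf {l | ∃ f g : Fin l → V,
    IsLazySweep G f ∧ IsLazySweep G g ∧ mDist G f g = strongEdgeSpan G}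

/-- `L×_E(G)`. -/
noncomputable def directEdgeL {V : Type*} (G : SimpleGraph V) : ℕ :=
  sInf {l | ∃ f g : Fin l → V,
    IsSweep G f ∧ IsSweep G g ∧ mDist G f g = directEdgeSpan G}

/-- `L□_E(G)`. -/
noncomputable def cartesianEdgeL {V : Type*} (G : SimpleGraph V) : ℕ :=
  sInf {l | ∃ f g : Fin l → V,
    IsLazySweep G f ∧ IsLazySweep G g ∧ IsOpposite G f g ∧ mDist G f g = cartesianEdgeSpan G}

/-!
For adjacent vertices `u, u'` of `C_n` and any `w`, the two arcs of the cycle give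
`d(u, w) + d(u', w) ≤ n - 1`. Since `f` must move at some step, at which `g` rests at some `w`,
`σ□_V(C_n) ≤ (n - 1) / 2`; letting `f` and `g` take turns stepping around the cycle, starting
`⌈n / 2⌉` apart, attains this bound with `l = 2n - 1`. Conversely a surjective lazy track on `n`
vertices moves at least `n - 1` times and opposite tracks never move at the same step, so
`l - 1 ≥ 2 (n - 1)`.
-/

open Finset

section Tracks

variable {V : Type*} {G : SimpleGraph V}

lemma mDist_le {l : ℕ} (f g : Fin l → V) (i : Fin l) : mDist G f g ≤ G.dist (f i) (g i) :=
  Nat.sInf_le ⟨i, rfl⟩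

lemma mDist_eq_of_forall_le {l d : ℕ} {f g : Fin l → V} (hle : ∀ i, d ≤ G.dist (f i) (g i))
    (i₀ : Fin l) (h₀ : G.dist (f i₀) (g i₀) = d) : mDist G f g = d :=
  le_antisymm (h₀ ▸ mDist_le f g i₀) <|
    le_csInf ⟨_, i₀, rfl⟩ (by rintro _ ⟨i, rfl⟩; exact hle i)

lemma card_image_le_one_add_card_moves [DecidableEq V] {k : ℕ} (f : Fin (k + 1) → V) :
    #(univ.image f) ≤ 1 + #{i : Fin k | f i.castSucc ≠ f i.succ} := by
  induction k with
  | zero => simp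
  | succ k ih =>
    have hmoves : #{i : Fin (k + 1) | f i.castSucc ≠ f i.succ} =
        #{i : Fin k | f i.castSucc.castSucc ≠ f i.succ.castSucc} +
          if f (Fin.last k).castSucc ≠ f (Fin.last (k + 1)) then 1 else 0 := by
      simp only [card_filter, Fin.sum_univ_castSucc, Fin.succ_castSucc, Fin.succ_last]
    have himage :
        univ.image f = insert (f (Fin.last (k + 1))) (univ.image (f ∘ Fin.castSucc)) := by
      ext v
      simp only [mem_image, mem_univ, true_and, mem_insert, Fin.exists_fin_succ',
        Function.comp_apply]
      tauto
    have := ih (f ∘ Fin.castSucc)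
    simp only [Function.comp_apply] at this
    rw [hmoves, himage]
    split_ifs with h
    · have := card_insert_le (f (Fin.last (k + 1))) (univ.image (f ∘ Fin.castSucc))
      omega
    · rw [insert_eq_of_mem (mem_image.mpr ⟨Fin.last k, mem_univ _, not_not.mp h⟩)]
      omega

lemma Function.Surjective.card_le_one_add_card_moves [Fintype V] [DecidableEq V] {k : ℕ}
    {f : Fin (k + 1) → V} (hf : Function.Surjective f) :
    Fintype.card V ≤ 1 + #{i : Fin k | f i.castSucc ≠ f i.succ} := by
  simpa [image_univ_of_surjective hf] using card_image_le_one_add_card_moves f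

theorem IsOpposite.two_mul_card_le [Fintype V] {l : ℕ} {f g : Fin l → V}
    (hf : IsLazyTrack G f) (hg : IsLazyTrack G g) (hfg : IsOpposite G f g) :
    2 * Fintype.card V ≤ l + 1 := by
  classical
  cases l with
  | zero =>
    have := Fintype.card_le_of_surjective f hf.1
    simp_all
  | succ k =>
    set movesF := univ.filter fun i : Fin k => f i.castSucc ≠ f i.succ
    set movesG := univ.filter fun i : Fin k => g i.castSucc ≠ g i.succ
    have hdisj : Disjoint movesF movesG := by
      refine disjoint_filter.mpr fun i _ hfi => not_not.mpr ?_
      exact (hfg i i.succ.isLt).mp ((hf.2 i i.succ.isLt).resolve_right hfi)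
    have hunion := card_le_univ (movesF ∪ movesG)
    rw [card_union_of_disjoint hdisj, Fintype.card_fin] at hunion
    have hF : Fintype.card V ≤ 1 + #movesF := hf.1.card_le_one_add_card_moves
    have hG : Fintype.card V ≤ 1 + #movesG := hg.1.card_le_one_add_card_moves
    omega

theorem IsOpposite.exists_adj_mDist_le [Finite V] [Nontrivial V] {l : ℕ} {f g : Fin l → V}
    (hf : IsLazyTrack G f) (hfg : IsOpposite G f g) :
    ∃ u u' w, G.Adj u u' ∧ mDist G f g ≤ G.dist u w ∧ mDist G f g ≤ G.dist u' w := by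
  classical
  have := Fintype.ofFinite V
  cases l with
  | zero => exact isEmptyElim (hf.1 (Classical.arbitrary V)).choose
  | succ k =>
    have hcard := hf.1.card_le_one_add_card_moves
    obtain ⟨i, -, hmove⟩ : ∃ i ∈ (univ : Finset (Fin k)), f i.castSucc ≠ f i.succ := by
      rw [← filter_nonempty_iff, ← card_pos]
      have := Fintype.one_lt_card (α := V)
      omega
    have hadj : G.Adj (f i.castSucc) (f i.succ) := (hf.2 i i.succ.isLt).resolve_right hmove
    have hstay : g i.castSucc = g i.succ := (hfg i i.succ.isLt).mp hadj
    exact ⟨_, _, g i.castSucc, hadj, mDist_le f g _, hstay ▸ mDist_le f g _⟩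

lemma isLazyTrack_isOpposite_of_steps {l : ℕ} {f g : Fin l → V}
    (hf : Function.Surjective f) (hg : Function.Surjective g)
    (hstep : ∀ i (hi : i + 1 < l),
      G.Adj (f ⟨i, Nat.lt_of_succ_lt hi⟩) (f ⟨i + 1, hi⟩) ∧
          g ⟨i, Nat.lt_of_succ_lt hi⟩ = g ⟨i + 1, hi⟩ ∨
        f ⟨i, Nat.lt_of_succ_lt hi⟩ = f ⟨i + 1, hi⟩ ∧
          G.Adj (g ⟨i, Nat.lt_of_succ_lt hi⟩) (g ⟨i + 1, hi⟩)) :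
    IsLazyTrack G f ∧ IsLazyTrack G g ∧ IsOpposite G f g := by
  refine ⟨⟨hf, fun i hi => ?_⟩, ⟨hg, fun i hi => ?_⟩, fun i hi => ?_⟩ <;>
    rcases hstep i hi with ⟨hmove, hstay⟩ | ⟨hstay, hmove⟩
  · exact .inl hmove
  · exact .inr hstay
  · exact .inr hstay
  · exact .inl hmove
  · exact iff_of_true hmove hstay
  · exact iff_of_false (hstay ▸ G.irrefl) hmove.ne

end Tracks

lemma SimpleGraph.Walk.le_add_length {V : Type*} {G : SimpleGraph V} {φ : V → ℕ}
    (hφ : ∀ a b, G.Adj a b → φ b ≤ φ a + 1) {u v : V} (p : G.Walk u v) :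
    φ v ≤ φ u + p.length := by
  induction p with
  | nil => simp
  | cons h _ ih =>
    rw [Walk.length_cons]
    have := hφ _ _ h
    omega

lemma SimpleGraph.Reachable.le_add_dist {V : Type*} {G : SimpleGraph V} {φ : V → ℕ}
    (hφ : ∀ a b, G.Adj a b → φ b ≤ φ a + 1) {u v : V} (h : G.Reachable u v) :
    φ v ≤ φ u + G.dist u v := by
  obtain ⟨p, hp⟩ := h.exists_walk_length_eq_dist
  exact hp ▸ p.le_add_length hφ

section CycleGraph

open Fin.NatCast Fin.CommRing

variable {n : ℕ}

lemma Fin.val_sub_eq_or (a b : Fin n) :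
    (a - b).val = a.val - b.val ∧ b ≤ a ∨ (a - b).val = n + a.val - b.val ∧ a < b := by
  rcases le_or_gt b a with h | h
  · exact Or.inl ⟨Fin.coe_sub_iff_le.mpr h, h⟩
  · exact Or.inr ⟨Fin.coe_sub_iff_lt.mpr h, h⟩

lemma Fin.val_sub_add_val_sub {a b : Fin n} (h : a ≠ b) : (a - b).val + (b - a).val = n := by
  rcases Fin.val_sub_eq_or a b with ⟨hab, hle⟩ | ⟨hab, hlt⟩
  · rw [hab, Fin.coe_sub_iff_lt.mpr (lt_of_le_of_ne hle h.symm)]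
    omega
  · rw [hab, Fin.coe_sub_iff_le.mpr hlt.le]
    omega

lemma cycleGraph_adj_val {x y : Fin n} (h : (cycleGraph n).Adj x y) :
    x.val = y.val + 1 ∨ y.val = x.val + 1 ∨
      (x.val = 0 ∧ y.val + 1 = n) ∨ (y.val = 0 ∧ x.val + 1 = n) := by
  rw [cycleGraph_adj'] at h
  have := x.is_lt
  have := y.is_lt
  rcases Fin.val_sub_eq_or x y with ⟨hxy, hle⟩ | ⟨hxy, hlt⟩ <;>
    rcases Fin.val_sub_eq_or y x with ⟨hyx, hle'⟩ | ⟨hyx, hlt'⟩ <;>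
    simp only [Fin.le_def, Fin.lt_def] at * <;> omega

lemma cycleGraph_adj_sub_right [NeZero n] {x y : Fin n} (z : Fin n) :
    (cycleGraph n).Adj (x - z) (y - z) ↔ (cycleGraph n).Adj x y := by
  simp only [cycleGraph_adj', sub_sub_sub_cancel_right]

lemma cycleGraph_adj_add_one [NeZero n] (hn : 2 ≤ n) (x : Fin n) :
    (cycleGraph n).Adj x (x + 1) :=
  cycleGraph_adj'.mpr (Or.inr (by rw [add_sub_cancel_left, Fin.val_one', Nat.mod_eq_of_lt hn]))

lemma cycleGraph_dist_add_natCast_le [NeZero n] (u : Fin n) (k : ℕ) :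
    (cycleGraph n).dist u (u + k) ≤ k := by
  induction k generalizing u with
  | zero => simp
  | succ k ih =>
    have hstep : (cycleGraph n).dist u (u + 1) ≤ 1 := by
      rcases Nat.lt_or_ge n 2 with hn | hn
      · have : Subsingleton (Fin n) := Fin.subsingleton_iff_le_one.mpr (by omega)
        simp [Subsingleton.elim (u + 1) u]
      · exact (dist_eq_one_iff_adj.mpr (cycleGraph_adj_add_one hn u)).le
    calc (cycleGraph n).dist u (u + (k + 1 : ℕ))
        ≤ (cycleGraph n).dist u (u + 1) + (cycleGraph n).dist (u + 1) (u + 1 + k) := by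
          rw [Nat.cast_succ, add_comm (k : Fin n), ← add_assoc]
          exact (cycleGraph_preconnected (u + 1) _).dist_triangle_right u
      _ ≤ k + 1 := by have := ih (u + 1); omega

theorem cycleGraph_dist (u v : Fin n) :
    (cycleGraph n).dist u v = min (v - u).val (n - (v - u).val) := by
  have : NeZero n := NeZero.of_pos u.pos
  refine le_antisymm (le_min ?_ ?_) ?_
  · simpa using cycleGraph_dist_add_natCast_le u (v - u).val
  · rcases eq_or_ne v u with rfl | hne
    · simp
    rw [dist_comm]
    have := Fin.val_sub_add_val_sub hne.symm
    have := cycleGraph_dist_add_natCast_le v (u - v).val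
    simp only [Fin.cast_val_eq_self, add_sub_cancel] at this
    omega
  · have hφ : ∀ a b, (cycleGraph n).Adj a b →
        min (b - u).val (n - (b - u).val) ≤ min (a - u).val (n - (a - u).val) + 1 := by
      intro a b hab
      have := cycleGraph_adj_val ((cycleGraph_adj_sub_right u).mpr hab)
      omega
    simpa using (cycleGraph_preconnected u v).le_add_dist hφ

lemma cycleGraph_dist_add_dist_le {u u' : Fin n} (hadj : (cycleGraph n).Adj u u') (w : Fin n) :
    (cycleGraph n).dist u w + (cycleGraph n).dist u' w ≤ n - 1 := by
  have : NeZero n := NeZero.of_pos u.pos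
  rw [dist_comm, cycleGraph_dist, dist_comm, cycleGraph_dist]
  have := cycleGraph_adj_val ((cycleGraph_adj_sub_right w).mpr hadj)
  omega

theorem exists_opposite_lazyTracks_cycleGraph (hn : 2 ≤ n) :
    ∃ f g : Fin (2 * n - 1) → Fin n,
      IsLazyTrack (cycleGraph n) f ∧ IsLazyTrack (cycleGraph n) g ∧
        IsOpposite (cycleGraph n) f g ∧ mDist (cycleGraph n) f g = (n - 1) / 2 := by
  have : NeZero n := ⟨by omega⟩
  set c := (n + 1) / 2
  -- `f` steps at even times and `g` at odd times, so `g i - f i` alternates between `c` and `c - 1`.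
  let f : Fin (2 * n - 1) → Fin n := fun i => ((i.val + 1) / 2 : ℕ)
  let g : Fin (2 * n - 1) → Fin n := fun i => ((i.val / 2 + c : ℕ) : Fin n)
  have hf : Function.Surjective f := fun v => ⟨⟨2 * v.val, by omega⟩, by
    simp [f, show (2 * v.val + 1) / 2 = v.val by omega]⟩
  have hg : Function.Surjective g := fun v => ⟨⟨2 * (v - c).val, by omega⟩, by
    simp [g, show 2 * (v - c).val / 2 = (v - c).val by omega]⟩
  have hdist :
      ∀ i, (cycleGraph n).dist (f i) (g i) = min (c - i.val % 2) (n - (c - i.val % 2)) := by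
    intro i
    have hgf : g i = f i + ((c - i.val % 2 : ℕ) : Fin n) := by
      simp only [f, g, ← Nat.cast_add]
      congr 1
      omega
    rw [cycleGraph_dist, hgf, add_sub_cancel_left, Fin.val_natCast, Nat.mod_eq_of_lt (by omega)]
  obtain ⟨hfl, hgl, hfg⟩ := isLazyTrack_isOpposite_of_steps (G := cycleGraph n) hf hg (by
    intro i hi
    rcases Nat.even_or_odd' i with ⟨j, rfl | rfl⟩
    · left
      have hf' : f ⟨2 * j + 1, hi⟩ = f ⟨2 * j, by omega⟩ + 1 := by
        simp only [f, show (2 * j + 1 + 1) / 2 = (2 * j + 1) / 2 + 1 by omega, Nat.cast_succ]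
      have hg' : g ⟨2 * j + 1, hi⟩ = g ⟨2 * j, by omega⟩ := by
        simp only [g, show (2 * j + 1) / 2 = 2 * j / 2 by omega]
      exact ⟨hf' ▸ cycleGraph_adj_add_one hn _, hg'.symm⟩
    · right
      have hf' : f ⟨2 * j + 1 + 1, hi⟩ = f ⟨2 * j + 1, by omega⟩ := by
        simp only [f, show (2 * j + 1 + 1 + 1) / 2 = (2 * j + 1 + 1) / 2 by omega]
      have hg' : g ⟨2 * j + 1 + 1, hi⟩ = g ⟨2 * j + 1, by omega⟩ + 1 := by
        simp only [g, show (2 * j + 1 + 1) / 2 + c = (2 * j + 1) / 2 + c + 1 by omega,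
          Nat.cast_succ]
      exact ⟨hf'.symm, hg' ▸ cycleGraph_adj_add_one hn _⟩)
  refine ⟨f, g, hfl, hgl, hfg, mDist_eq_of_forall_le (fun i => ?_) ⟨1, by omega⟩ ?_⟩ <;>
    simp only [hdist] <;> omega

theorem mDist_le_of_isOpposite_cycleGraph (hn : 2 ≤ n) {l : ℕ} {f g : Fin l → Fin n}
    (hf : IsLazyTrack (cycleGraph n) f) (hfg : IsOpposite (cycleGraph n) f g) :
    mDist (cycleGraph n) f g ≤ (n - 1) / 2 := by
  have : Nontrivial (Fin n) := Fin.nontrivial_iff_two_le.mpr hn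
  obtain ⟨u, u', w, hadj, hu, hu'⟩ := hfg.exists_adj_mDist_le hf
  have := cycleGraph_dist_add_dist_le hadj w
  omega

theorem cartesianVertexSpan_cycleGraph (hn : 2 ≤ n) :
    cartesianVertexSpan (cycleGraph n) = (n - 1) / 2 := by
  obtain ⟨f, g, hf, hg, hfg, hm⟩ := exists_opposite_lazyTracks_cycleGraph hn
  refine IsGreatest.csSup_eq ⟨⟨_, f, g, hf, hg, hfg, hm⟩, ?_⟩
  rintro _ ⟨l, f', g', hf', -, hfg', rfl⟩
  exact mDist_le_of_isOpposite_cycleGraph hn hf' hfg'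

end CycleGraph

theorem stmt16 (n : ℕ) (hn : 3 ≤ n) :
    cartesianVertexL (SimpleGraph.cycleGraph n) = 2 * n - 1 := by
  obtain ⟨f, g, hf, hg, hfg, hm⟩ := exists_opposite_lazyTracks_cycleGraph (n := n) (by omega)
  have hspan := cartesianVertexSpan_cycleGraph (n := n) (by omega)
  refine IsLeast.csInf_eq ⟨⟨f, g, hf, hg, hfg, hm.trans hspan.symm⟩, ?_⟩
  rintro l ⟨f', g', hf', hg', hfg', -⟩
  have := hfg'.two_mul_card_le hf' hg'
  rw [Fintype.card_fin] at this
  omega
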